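/- arXiv:1810.00809 — 2 statements merged into one kernel-verified Lean document; each statement's English description precedes it below -/
import Mathlib

section
/- Let S : [0,∞) → [0,∞) be continuous with S(0) = 0 and |S(q) − 3q| ≤ C₀ q^{1/2} for all q ≥ 0 and some constant C₀ > 0. Let κ > 0. Let p ∈ C¹([0,∞)) be a nonnegative solution of the TOV equation with ρ = S(p), with p(0) = e^{4κ}/3, satisfying the Buchdahl bound 2m(r)/r ≤ 8/9 for all r > 0, where m(r) = 4π ∫₀^r s² S(p(s)) ds. Let p* ∈ C¹([0,∞)) be a nonnegative solution of the massless TOV equation with p*(0) = e^{4κ}/3, satisfying 2m*(r)/r ≤ 8/9 for all r > 0, where m*(r) = 12π ∫₀^r s² p*(s) ds. Then there is a constant C > 0, depending only on C₀ (in particular independent of κ and r), such that for all r ≥ 0: |p(r) − p*(r)| ≤ C e^{6κ} (r² + e^{4κ} r⁴) exp( C (e^{4κ} r² + e^{8κ} r⁴) ). -/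
/-!
Write `g = p - p*`. Both pressures are nonincreasing, so `p, p* ≤ e^{4κ}/3`; hence
`S(p) = 3p + O(e^{2κ})` and every density involved is `O(e^{4κ})`. Subtracting the two TOV
equations, with the Buchdahl bound keeping `1 - 2m/r ≥ 1/9`, gives
`|g'(r)| ≤ ε + L |g(r)| + L² ∫₀^r |g|` with `ε = O(e^{6κ} r + e^{10κ} r³)` and
`L = O(e^{4κ} r + e^{2κ})`. Since `g(0) = 0`, Grönwall's inequality applied to `(g, L ∫₀^r |g|)`
gives `|g(r)| ≤ ε r e^{2Lr}`, which is the claimed bound.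
-/

open MeasureTheory

noncomputable section

/-- The quasi-local mass `m(r) = 4π ∫₀^r s² S(p(s)) ds` associated with a pressure profile `p`
and inverse equation of state `ρ = S(p)`. -/
def tovMass (S p : ℝ → ℝ) (r : ℝ) : ℝ :=
  4 * Real.pi * ∫ s in (0:ℝ)..r, s ^ 2 * S (p s)

/-- `p` is a nonnegative `C¹([0,∞))` solution of the TOV equation with equation of state
`ρ = S(p)`. -/
def SolvesTOV (S p : ℝ → ℝ) : Prop :=
  ContDiffOn ℝ 1 p (Set.Ici 0) ∧ (∀ r : ℝ, 0 ≤ r → 0 ≤ p r) ∧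
  (∀ r : ℝ, 0 < r → 2 * tovMass S p r / r < 1) ∧
  (∀ r : ℝ, 0 < r →
    deriv p r = -(S (p r) + p r) / (1 - 2 * tovMass S p r / r) *
      (tovMass S p r / r ^ 2 + 4 * Real.pi * r * p r))

open Set Filter Topology Real

/- `norm_le_gronwallBound_of_norm_deriv_right_le` also needs a right derivative at `a`: apply it
on `[c, b]` and let `c → a⁺`. -/
theorem norm_le_gronwallBound_of_hasDerivAt_Ioo {E : Type*} [NormedAddCommGroup E]
    [NormedSpace ℝ E] {f f' : ℝ → E} {K ε a b : ℝ} (hab : a ≤ b)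
    (hf : ContinuousOn f (Icc a b)) (hf' : ∀ x ∈ Ioo a b, HasDerivAt f (f' x) x)
    (bound : ∀ x ∈ Ioo a b, ‖f' x‖ ≤ K * ‖f x‖ + ε) :
    ‖f b‖ ≤ gronwallBound ‖f a‖ K ε (b - a) := by
  rcases hab.eq_or_lt with rfl | hab
  · rw [sub_self, gronwallBound_x0]
  have hc : ∀ c ∈ Ioo a b, ‖f b‖ ≤ gronwallBound ‖f c‖ K ε (b - c) := fun c hc =>
    norm_le_gronwallBound_of_norm_deriv_right_le (hf.mono (Icc_subset_Icc_left hc.1.le))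
      (fun x hx => (hf' x ⟨hc.1.trans_le hx.1, hx.2⟩).hasDerivWithinAt) le_rfl
      (fun x hx => bound x ⟨hc.1.trans_le hx.1, hx.2⟩) b (right_mem_Icc.2 hc.2.le)
  have hfa : ContinuousWithinAt f (Ioi a) a := (continuousWithinAt_Ioo_iff_Ioi hab).1
    ((hf a (left_mem_Icc.2 hab.le)).mono Ioo_subset_Icc_self)
  have hlim : ContinuousWithinAt (fun c => gronwallBound ‖f c‖ K ε (b - c)) (Ioi a) a := by
    unfold gronwallBound
    split_ifs
    · exact hfa.norm.add (continuousWithinAt_const.mul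
        (continuousWithinAt_const.sub continuousWithinAt_id))
    · fun_prop
  refine ge_of_tendsto hlim ?_
  filter_upwards [Ioo_mem_nhdsGT hab] using hc

/- Grönwall's inequality for `t ↦ (g t, L ∫₀ᵗ |g|)` in `ℝ × ℝ` with the sup norm. -/
theorem abs_le_gronwallBound_of_abs_deriv_le_integral {g g' : ℝ → ℝ} {L ε r : ℝ} (hL : 0 ≤ L)
    (hε : 0 ≤ ε) (hr : 0 ≤ r) (hg : ContinuousOn g (Icc 0 r))
    (hg' : ∀ t ∈ Ioo 0 r, HasDerivAt g (g' t) t)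
    (bound : ∀ t ∈ Ioo 0 r, |g' t| ≤ ε + L * |g t| + L ^ 2 * ∫ s in (0)..t, |g s|) :
    |g r| ≤ gronwallBound |g 0| (2 * L) ε r := by
  set W : ℝ → ℝ := fun t => ∫ s in (0)..t, |g s|
  have hW : ContinuousOn W (Icc 0 r) := by
    simpa only [uIcc_of_le hr] using intervalIntegral.continuousOn_primitive_interval'
      (hg.abs.intervalIntegrable_of_Icc hr) left_mem_uIcc
  have hW' : ∀ t ∈ Ioo 0 r, HasDerivAt W |g t| t := fun t ht =>
    intervalIntegral.integral_hasDerivAt_right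
      ((hg.abs.mono (Icc_subset_Icc_right ht.2.le)).intervalIntegrable_of_Icc ht.1.le)
      ((hg.abs.mono Ioo_subset_Icc_self).stronglyMeasurableAtFilter isOpen_Ioo t ht)
      (hg.abs.continuousAt (Icc_mem_nhds ht.1 ht.2))
  have hW0 : ∀ t ∈ Ioo 0 r, 0 ≤ W t := fun t ht =>
    intervalIntegral.integral_nonneg ht.1.le fun s _ => abs_nonneg _
  have key := norm_le_gronwallBound_of_hasDerivAt_Ioo (f := fun t => (g t, L * W t))
    (f' := fun t => (g' t, L * |g t|)) (K := 2 * L) (ε := ε) hr (hg.prodMk (hW.const_smul L))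
    (fun t ht => (hg' t ht).prodMk ((hW' t ht).const_mul L)) fun t ht => by
      simp only [Prod.norm_def, Real.norm_eq_abs, abs_mul, abs_of_nonneg hL, abs_abs,
        abs_of_nonneg (hW0 t ht)]
      have h1 := le_max_left |g t| (L * W t)
      have h2 := le_max_right |g t| (L * W t)
      refine max_le ?_ ?_
      · calc |g' t| ≤ ε + L * |g t| + L * (L * W t) := by
              rw [← mul_assoc, ← sq]; exact bound t ht
          _ ≤ _ := by nlinarith
      · nlinarith [abs_nonneg (g t)]
  simpa [Prod.norm_def, W] using (le_max_left _ _).trans key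

lemma gronwallBound_zero_le {K ε x : ℝ} (hK : 0 ≤ K) (hε : 0 ≤ ε) :
    gronwallBound 0 K ε x ≤ ε * x * exp (K * x) := by
  rcases hK.eq_or_lt with rfl | hK
  · simp [gronwallBound_K0]
  simp only [gronwallBound_of_K_ne_0 hK.ne', zero_mul, zero_add]
  have h : exp (K * x) - 1 ≤ K * x * exp (K * x) := by
    nlinarith [add_one_le_exp (-(K * x)), exp_neg (K * x), exp_pos (K * x),
      mul_inv_cancel₀ (exp_pos (K * x)).ne']
  calc ε / K * (exp (K * x) - 1) ≤ ε / K * (K * x * exp (K * x)) := by gcongr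
    _ = ε * x * exp (K * x) := by field_simp

lemma abs_neg_div_mul_sub_neg_div_mul_le {Q₁ Q₂ D₁ D₂ B₁ B₂ Qm Bm d : ℝ} (hd : 0 < d)
    (hD₁ : d ≤ D₁) (hD₂ : d ≤ D₂) (hQ₂ : 0 ≤ Q₂) (hQ₂m : Q₂ ≤ Qm) (hB₁ : 0 ≤ B₁) (hB₁m : B₁ ≤ Bm)
    (hB₂ : 0 ≤ B₂) (hB₂m : B₂ ≤ Bm) :
    |-Q₁ / D₁ * B₁ - -Q₂ / D₂ * B₂| ≤
      (|Q₁ - Q₂| * Bm + Qm * |B₁ - B₂|) / d + Qm * Bm * |D₁ - D₂| / d ^ 2 := by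
  have hD₁0 : 0 < D₁ := hd.trans_le hD₁
  have hD₂0 : 0 < D₂ := hd.trans_le hD₂
  have hQm : 0 ≤ Qm := hQ₂.trans hQ₂m
  have hBm : 0 ≤ Bm := hB₁.trans hB₁m
  have hid : -Q₁ / D₁ * B₁ - -Q₂ / D₂ * B₂ =
      -((Q₁ - Q₂) * B₁ / D₁ + Q₂ * (B₁ - B₂) / D₁ + Q₂ * B₂ * (D₂ - D₁) / (D₁ * D₂)) := by
    field_simp; ring
  rw [hid, abs_neg]
  refine (abs_add_three _ _ _).trans ?_
  simp only [abs_div, abs_mul, abs_of_pos hD₁0, abs_of_pos hD₂0, abs_of_nonneg hQ₂,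
    abs_of_nonneg hB₁, abs_of_nonneg hB₂, abs_sub_comm D₂ D₁]
  have h1 : |Q₁ - Q₂| * B₁ / D₁ ≤ |Q₁ - Q₂| * Bm / d := by gcongr
  have h2 : Q₂ * |B₁ - B₂| / D₁ ≤ Qm * |B₁ - B₂| / d := by gcongr
  have h3 : Q₂ * B₂ * |D₁ - D₂| / (D₁ * D₂) ≤ Qm * Bm * |D₁ - D₂| / d ^ 2 := by
    rw [sq]; gcongr
  rw [add_div]; linarith

lemma tovMass_nonneg {S p : ℝ → ℝ} {r : ℝ} (hr : 0 ≤ r) (h : ∀ s ∈ Icc 0 r, 0 ≤ S (p s)) :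
    0 ≤ tovMass S p r :=
  mul_nonneg (by positivity)
    (intervalIntegral.integral_nonneg hr fun s hs => mul_nonneg (sq_nonneg s) (h s hs))

lemma tovMass_le {S p : ℝ → ℝ} {r M : ℝ} (hr : 0 ≤ r)
    (hcont : ContinuousOn (fun s => S (p s)) (Icc 0 r)) (hM : ∀ s ∈ Icc 0 r, S (p s) ≤ M) :
    tovMass S p r ≤ 4 * π * (M * r ^ 3 / 3) := by
  have hint : IntervalIntegrable (fun s => s ^ 2 * S (p s)) volume 0 r :=
    ((continuousOn_pow 2).mul hcont).intervalIntegrable_of_Icc hr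
  have hle : ∫ s in (0)..r, s ^ 2 * S (p s) ≤ ∫ s in (0)..r, M * s ^ 2 :=
    intervalIntegral.integral_mono_on hr hint
      ((continuous_const.mul (continuous_pow 2)).intervalIntegrable 0 r) fun s hs => by
      rw [mul_comm M]; exact mul_le_mul_of_nonneg_left (hM s hs) (sq_nonneg s)
  rw [intervalIntegral.integral_const_mul, integral_pow] at hle
  unfold tovMass
  gcongr
  exact hle.trans_eq (by norm_num; ring)

lemma abs_tovMass_sub_le {S T p q : ℝ → ℝ} {r : ℝ} (hr : 0 ≤ r)
    (hp : ContinuousOn (fun s => S (p s)) (Icc 0 r))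
    (hq : ContinuousOn (fun s => T (q s)) (Icc 0 r)) :
    |tovMass S p r - tovMass T q r| ≤ 4 * π * r ^ 2 * ∫ s in (0)..r, |S (p s) - T (q s)| := by
  have hsq : ContinuousOn (fun s : ℝ => s ^ 2) (Icc 0 r) := continuousOn_pow 2
  have hint : IntervalIntegrable (fun s => |S (p s) - T (q s)|) volume 0 r :=
    (hp.sub hq).abs.intervalIntegrable_of_Icc hr
  have hdiff : tovMass S p r - tovMass T q r =
      4 * π * ∫ s in (0)..r, s ^ 2 * (S (p s) - T (q s)) := by
    simp only [tovMass, mul_sub]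
    rw [intervalIntegral.integral_sub (f := fun s => s ^ 2 * S (p s))
      (g := fun s => s ^ 2 * T (q s)) ((hsq.mul hp).intervalIntegrable_of_Icc hr)
      ((hsq.mul hq).intervalIntegrable_of_Icc hr), mul_sub]
  rw [hdiff, abs_mul, abs_of_pos (by positivity : (0:ℝ) < 4 * π), mul_assoc (4 * π)]
  gcongr
  calc |∫ s in (0)..r, s ^ 2 * (S (p s) - T (q s))|
      ≤ ∫ s in (0)..r, |s ^ 2 * (S (p s) - T (q s))| :=
        intervalIntegral.abs_integral_le_integral_abs hr
    _ ≤ ∫ s in (0)..r, r ^ 2 * |S (p s) - T (q s)| := by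
        refine intervalIntegral.integral_mono_on hr
          ((hsq.mul (hp.sub hq)).abs.intervalIntegrable_of_Icc hr) (hint.const_mul _) fun s hs => ?_
        rw [abs_mul, abs_of_nonneg (sq_nonneg s)]
        gcongr
        exacts [hs.1, hs.2]
    _ = r ^ 2 * ∫ s in (0)..r, |S (p s) - T (q s)| := intervalIntegral.integral_const_mul _ _

lemma SolvesTOV.hasDerivAt {S p : ℝ → ℝ} (hp : SolvesTOV S p) {r : ℝ} (hr : 0 < r) :
    HasDerivAt p (deriv p r) r :=
  ((hp.1.differentiableOn one_ne_zero).differentiableAt (Ici_mem_nhds hr)).hasDerivAt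

lemma SolvesTOV.continuousOn_comp {S p : ℝ → ℝ} (hS : ContinuousOn S (Ici 0))
    (hp : SolvesTOV S p) : ContinuousOn (fun s => S (p s)) (Ici 0) :=
  hS.comp hp.1.continuousOn hp.2.1

lemma SolvesTOV.antitoneOn {S p : ℝ → ℝ} (hS : ∀ x, 0 ≤ x → 0 ≤ S x) (hp : SolvesTOV S p) :
    AntitoneOn p (Ici 0) := by
  refine antitoneOn_of_deriv_nonpos (convex_Ici 0) hp.1.continuousOn ?_ fun r hr => ?_
  · rw [interior_Ici]
    exact fun r hr => (hp.hasDerivAt hr).differentiableAt.differentiableWithinAt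
  rw [interior_Ici] at hr
  obtain ⟨-, hnn, hm, hode⟩ := hp
  have hm0 : 0 ≤ tovMass S p r := tovMass_nonneg hr.le fun s hs => hS _ (hnn s hs.1)
  have hD : 0 < 1 - 2 * tovMass S p r / r := sub_pos.2 (hm r hr)
  have hpr := hnn r hr.le
  have hSpr := hS _ hpr
  rw [hode r hr]
  exact mul_nonpos_of_nonpos_of_nonneg (div_nonpos_of_nonpos_of_nonneg (by linarith) hD.le)
    (add_nonneg (div_nonneg hm0 (sq_nonneg r)) (mul_nonneg (mul_nonneg (by positivity) hr.le) hpr))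

lemma mass_div_sq_add_pressure_mem_Icc {m P M t : ℝ} (ht : 0 < t) (hm : 0 ≤ m)
    (hmM : m ≤ 4 * π * (M * t ^ 3 / 3)) (hP : 0 ≤ P) (hPM : P ≤ M) :
    m / t ^ 2 + 4 * π * t * P ∈ Icc 0 (24 * M * t) := by
  have hmt : m / t ^ 2 ≤ 4 * π * (M * t / 3) := calc
    m / t ^ 2 ≤ 4 * π * (M * t ^ 3 / 3) / t ^ 2 := by gcongr
    _ = 4 * π * (M * t / 3) := by field_simp
  have hMt : π * (M * t) ≤ 4 * (M * t) :=
    mul_le_mul_of_nonneg_right pi_le_four (mul_nonneg (hP.trans hPM) ht.le)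
  have hPt : 4 * π * t * P ≤ 4 * π * t * M := by gcongr
  exact ⟨by positivity, by nlinarith⟩

lemma abs_tov_factors_sub_le {m₁ m₂ P₁ P₂ t X : ℝ} (ht : 0 < t)
    (hm : |m₁ - m₂| ≤ 16 * t ^ 2 * X) :
    |1 - 2 * m₁ / t - (1 - 2 * m₂ / t)| ≤ 32 * t * X ∧
      |m₁ / t ^ 2 + 4 * π * t * P₁ - (m₂ / t ^ 2 + 4 * π * t * P₂)| ≤
        16 * X + 16 * t * |P₁ - P₂| := by
  constructor
  · calc _ = 2 / t * |m₁ - m₂| := by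
          rw [show 1 - 2 * m₁ / t - (1 - 2 * m₂ / t) = 2 / t * (m₂ - m₁) by ring, abs_mul,
            abs_of_pos (by positivity : 0 < 2 / t), abs_sub_comm]
      _ ≤ 2 / t * (16 * t ^ 2 * X) := by gcongr
      _ = 32 * t * X := by field_simp; ring
  · calc _ = |(m₁ - m₂) / t ^ 2 + 4 * π * t * (P₁ - P₂)| := by ring_nf
      _ ≤ |m₁ - m₂| / t ^ 2 + 4 * π * t * |P₁ - P₂| := by
          grw [abs_add_le, abs_div, abs_mul, abs_of_pos (by positivity : 0 < 4 * π * t),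
            abs_of_pos (by positivity : 0 < t ^ 2)]
      _ ≤ 16 * t ^ 2 * X / t ^ 2 + 4 * 4 * t * |P₁ - P₂| := by gcongr; exact pi_le_four
      _ = 16 * X + 16 * t * |P₁ - P₂| := by field_simp; ring

section Comparison

variable {S p q : ℝ → ℝ} {A M : ℝ}
  (hScont : ContinuousOn S (Ici 0)) (hSnn : ∀ x, 0 ≤ x → 0 ≤ S x)
  (hp : SolvesTOV S p) (hq : SolvesTOV (fun x => 3 * x) q)
  (hpB : ∀ r, 0 < r → 2 * tovMass S p r / r ≤ 8 / 9)
  (hqB : ∀ r, 0 < r → 2 * tovMass (fun x => 3 * x) q r / r ≤ 8 / 9)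
  (hA : ∀ t, 0 ≤ t → |S (p t) - 3 * p t| ≤ A)
  (hM : ∀ t, 0 ≤ t → S (p t) ≤ M ∧ p t ≤ M ∧ 3 * q t ≤ M)

include hScont hp hq hA in
lemma abs_tovMass_sub_tovMass_massless_le {t : ℝ} (ht : 0 ≤ t) :
    |tovMass S p t - tovMass (fun x => 3 * x) q t| ≤
      4 * π * t ^ 2 * (A * t + 3 * ∫ s in (0)..t, |p s - q s|) := by
  have hSp := (hp.continuousOn_comp hScont).mono (Icc_subset_Ici_self : Icc 0 t ⊆ Ici 0)
  have h3q : ContinuousOn (fun s => 3 * q s) (Icc 0 t) :=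
    continuousOn_const.mul (hq.1.continuousOn.mono Icc_subset_Ici_self)
  have hpq : ContinuousOn (fun s => |p s - q s|) (Icc 0 t) :=
    ((hp.1.continuousOn.sub hq.1.continuousOn).mono Icc_subset_Ici_self).abs
  refine (abs_tovMass_sub_le ht hSp h3q).trans ?_
  gcongr
  calc ∫ s in (0)..t, |S (p s) - 3 * q s| ≤ ∫ s in (0)..t, (A + 3 * |p s - q s|) := by
        refine intervalIntegral.integral_mono_on ht
          ((hSp.sub h3q).abs.intervalIntegrable_of_Icc ht)
          ((continuousOn_const.add (continuousOn_const.mul hpq)).intervalIntegrable_of_Icc ht)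
          fun s hs => ?_
        calc |S (p s) - 3 * q s| = |(S (p s) - 3 * p s) + 3 * (p s - q s)| := by ring_nf
          _ ≤ |S (p s) - 3 * p s| + |3 * (p s - q s)| := abs_add_le _ _
          _ ≤ A + 3 * |p s - q s| := by
            rw [abs_mul, abs_of_pos (three_pos : (0:ℝ) < 3)]; linarith [hA s hs.1]
    _ = A * t + 3 * ∫ s in (0)..t, |p s - q s| := by
        rw [intervalIntegral.integral_add intervalIntegrable_const
          ((hpq.intervalIntegrable_of_Icc ht).const_mul 3), intervalIntegral.integral_const_mul]
        simp [mul_comm]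

include hScont hSnn hp hq hpB hqB hA hM in
lemma abs_deriv_sub_deriv_le {t : ℝ} (ht : 0 < t) :
    |deriv p t - deriv q t| ≤ 10 ^ 6 * (A * (M * t + M ^ 2 * t ^ 3) + M * t * |p t - q t| +
      (M + M ^ 2 * t ^ 2) * ∫ s in (0)..t, |p s - q s|) := by
  have hD : ∀ m, 2 * m / t ≤ 8 / 9 → 1 / 9 ≤ 1 - 2 * m / t := fun m hm => by linarith
  obtain ⟨-, hpM, hqM⟩ := hM t ht.le
  have hpt := hp.2.1 t ht.le
  have hqt := hq.2.1 t ht.le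
  have hmp0 : 0 ≤ tovMass S p t := tovMass_nonneg ht.le fun s hs => hSnn _ (hp.2.1 s hs.1)
  have hmq0 : 0 ≤ tovMass (fun x => 3 * x) q t :=
    tovMass_nonneg ht.le fun s hs => by have := hq.2.1 s hs.1; positivity
  have hmp := tovMass_le ht.le ((hp.continuousOn_comp hScont).mono Icc_subset_Ici_self)
    fun s hs => (hM s hs.1).1
  have hmq := tovMass_le (S := fun x => 3 * x) (p := q) ht.le
    (continuousOn_const.mul (hq.1.continuousOn.mono Icc_subset_Ici_self))
    fun s hs => (hM s hs.1).2.2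
  have hBp := mass_div_sq_add_pressure_mem_Icc ht hmp0 hmp hpt hpM
  have hBq := mass_div_sq_add_pressure_mem_Icc ht hmq0 hmq hqt (by linarith)
  rw [hp.2.2.2 t ht, hq.2.2.2 t ht]
  -- both right-hand sides are `-Q / D * B` with `0 ≤ Q ≤ 2M`, `0 ≤ B ≤ 24Mt` and, by the
  -- Buchdahl bound, `D ≥ 1/9`
  refine (abs_neg_div_mul_sub_neg_div_mul_le (Qm := 2 * M) (d := 1 / 9) (by norm_num)
    (hD _ (hpB t ht)) (hD _ (hqB t ht)) (by positivity) (by linarith)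
    hBp.1 hBp.2 hBq.1 hBq.2).trans ?_
  set W := ∫ s in (0)..t, |p s - q s|
  set G := |p t - q t|
  have hW : 0 ≤ W := intervalIntegral.integral_nonneg ht.le fun s _ => abs_nonneg _
  have hG : 0 ≤ G := abs_nonneg _
  have hA0 : 0 ≤ A := (abs_nonneg _).trans (hA t ht.le)
  have hM0 : 0 ≤ M := hpt.trans hpM
  have hΔQ : |S (p t) + p t - (3 * q t + q t)| ≤ A + 4 * G := calc
    _ = |(S (p t) - 3 * p t) + 4 * (p t - q t)| := by ring_nf
    _ ≤ A + 4 * G := by grw [abs_add_le, abs_mul, hA t ht.le]; norm_num; rfl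
  obtain ⟨hΔD, hΔB⟩ := abs_tov_factors_sub_le (P₁ := p t) (P₂ := q t) ht
    ((abs_tovMass_sub_tovMass_massless_le hScont hp hq hA ht.le).trans
      (by gcongr; linarith [pi_le_four]))
  grw [hΔQ, hΔB, hΔD]
  have h1 : 0 ≤ A * M * t := by positivity
  have h2 : 0 ≤ A * M ^ 2 * t ^ 3 := by positivity
  have h3 : 0 ≤ M * t * G := by positivity
  have h4 : 0 ≤ M * W := by positivity
  have h5 : 0 ≤ M ^ 2 * t ^ 2 * W := by positivity
  ring_nf
  linarith

include hScont hSnn hp hq hpB hqB hA hM in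
theorem abs_sub_le_of_solvesTOV_massless (hpq0 : p 0 = q 0) {r : ℝ} (hr : 0 ≤ r) :
    |p r - q r| ≤
      10 ^ 6 * A * (M * r ^ 2 + M ^ 2 * r ^ 4) * exp (10 ^ 6 * (1 + 3 * M * r ^ 2)) := by
  have hA0 : 0 ≤ A := (abs_nonneg _).trans (hA 0 le_rfl)
  have hM0 : 0 ≤ M := (hp.2.1 0 le_rfl).trans (hM 0 le_rfl).2.1
  have hL : 0 ≤ 10 ^ 6 * (M * r + √M) := by positivity
  have hε : 0 ≤ 10 ^ 6 * A * (M * r + M ^ 2 * r ^ 3) := by positivity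
  have hg := abs_le_gronwallBound_of_abs_deriv_le_integral (g := fun t => p t - q t)
    (g' := fun t => deriv p t - deriv q t) (L := 10 ^ 6 * (M * r + √M))
    (ε := 10 ^ 6 * A * (M * r + M ^ 2 * r ^ 3)) hL hε hr
    ((hp.1.continuousOn.sub hq.1.continuousOn).mono Icc_subset_Ici_self)
    (fun t ht => (hp.hasDerivAt ht.1).sub (hq.hasDerivAt ht.1)) fun t ht => by
      refine (abs_deriv_sub_deriv_le hScont hSnn hp hq hpB hqB hA hM ht.1).trans ?_
      obtain ⟨ht0, htr⟩ := ht
      have hW : 0 ≤ ∫ s in (0)..t, |p s - q s| :=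
        intervalIntegral.integral_nonneg ht0.le fun s _ => abs_nonneg _
      have hε' : 10 ^ 6 * (A * (M * t + M ^ 2 * t ^ 3)) ≤
          10 ^ 6 * A * (M * r + M ^ 2 * r ^ 3) := by
        rw [← mul_assoc]; gcongr
      have hL' : 10 ^ 6 * (M * t) ≤ 10 ^ 6 * (M * r + √M) := by
        have := Real.sqrt_nonneg M
        have := mul_le_mul_of_nonneg_left htr.le hM0
        gcongr; linarith
      have hL2 : 10 ^ 6 * (M + M ^ 2 * t ^ 2) ≤ (10 ^ 6 * (M * r + √M)) ^ 2 := by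
        have hsq := Real.sq_sqrt hM0
        have hMr : M ^ 2 * t ^ 2 ≤ M ^ 2 * r ^ 2 := by gcongr
        nlinarith [mul_nonneg (mul_nonneg hM0 hr) (Real.sqrt_nonneg M)]
      nlinarith [mul_le_mul_of_nonneg_right hL' (abs_nonneg (p t - q t)),
        mul_le_mul_of_nonneg_right hL2 hW]
  simp only [hpq0, sub_self, abs_zero] at hg
  calc |p r - q r| ≤ 10 ^ 6 * A * (M * r + M ^ 2 * r ^ 3) * r *
        exp (2 * (10 ^ 6 * (M * r + √M)) * r) :=
      hg.trans (gronwallBound_zero_le (mul_nonneg two_pos.le hL) hε)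
    _ ≤ _ := by
      have hsq := Real.sq_sqrt hM0
      have hamgm : 2 * (√M * r) ≤ 1 + M * r ^ 2 := by nlinarith [sq_nonneg (√M * r - 1)]
      rw [show 10 ^ 6 * A * (M * r + M ^ 2 * r ^ 3) * r =
        10 ^ 6 * A * (M * r ^ 2 + M ^ 2 * r ^ 4) by ring]
      gcongr _ * exp ?_
      linarith

end Comparison

/- The bound of `abs_sub_le_of_solvesTOV_massless` for `A = c E`, `M = (c + 1) E²` and
`E = e^{2κ}` is dominated by the claimed one. -/
lemma comparison_bound_le {c E r : ℝ} (hc : 0 ≤ c) (hE : 0 ≤ E) :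
    10 ^ 6 * (c * E) * ((c + 1) * E ^ 2 * r ^ 2 + ((c + 1) * E ^ 2) ^ 2 * r ^ 4) *
        exp (10 ^ 6 * (1 + 3 * ((c + 1) * E ^ 2) * r ^ 2)) ≤
      3 * 10 ^ 6 * (c + 1) ^ 3 * exp (10 ^ 6) * E ^ 3 * (r ^ 2 + E ^ 2 * r ^ 4) *
        exp (3 * 10 ^ 6 * (c + 1) ^ 3 * exp (10 ^ 6) * (E ^ 2 * r ^ 2 + E ^ 4 * r ^ 4)) := by
  have hc1 : 1 ≤ c + 1 := by linarith
  have hpoly : 10 ^ 6 * (c * E) * ((c + 1) * E ^ 2 * r ^ 2 + ((c + 1) * E ^ 2) ^ 2 * r ^ 4) ≤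
      3 * 10 ^ 6 * (c + 1) ^ 3 * E ^ 3 * (r ^ 2 + E ^ 2 * r ^ 4) := by
    have h1 : c * (c + 1) ≤ (c + 1) ^ 3 := by
      nlinarith [pow_le_pow_right₀ hc1 (show 2 ≤ 3 by norm_num)]
    have h2 : c * (c + 1) ^ 2 ≤ (c + 1) ^ 3 := by nlinarith [sq_nonneg (c + 1)]
    have := mul_le_mul_of_nonneg_right h1 (by positivity : 0 ≤ E ^ 3 * r ^ 2)
    have := mul_le_mul_of_nonneg_right h2 (by positivity : 0 ≤ E ^ 5 * r ^ 4)
    have : 0 ≤ (c + 1) ^ 3 * (E ^ 3 * r ^ 2) := by positivity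
    have : 0 ≤ (c + 1) ^ 3 * (E ^ 5 * r ^ 4) := by positivity
    linarith
  have hexp : 10 ^ 6 * (1 + 3 * ((c + 1) * E ^ 2) * r ^ 2) ≤
      10 ^ 6 + 3 * 10 ^ 6 * (c + 1) ^ 3 * exp (10 ^ 6) * (E ^ 2 * r ^ 2 + E ^ 4 * r ^ 4) := by
    have h1 : c + 1 ≤ (c + 1) ^ 3 * exp (10 ^ 6) := calc
      c + 1 = (c + 1) ^ 1 := (pow_one _).symm
      _ ≤ (c + 1) ^ 3 := pow_le_pow_right₀ hc1 (by norm_num)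
      _ ≤ (c + 1) ^ 3 * exp (10 ^ 6) :=
        le_mul_of_one_le_right (by positivity) (one_le_exp (by norm_num))
    have := mul_le_mul_of_nonneg_right h1 (by positivity : 0 ≤ E ^ 2 * r ^ 2)
    have : 0 ≤ (c + 1) ^ 3 * exp (10 ^ 6) * (E ^ 4 * r ^ 4) := by positivity
    linarith
  calc _ ≤ 3 * 10 ^ 6 * (c + 1) ^ 3 * E ^ 3 * (r ^ 2 + E ^ 2 * r ^ 4) *
        exp (10 ^ 6 + 3 * 10 ^ 6 * (c + 1) ^ 3 * exp (10 ^ 6) *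
          (E ^ 2 * r ^ 2 + E ^ 4 * r ^ 4)) := by gcongr
    _ = _ := by rw [exp_add]; ring

theorem stmt6_general
    (S : ℝ → ℝ) (C₀ : ℝ) (hC₀ : 0 < C₀)
    (hScont : ContinuousOn S (Set.Ici 0))
    (hSnonneg : ∀ q : ℝ, 0 ≤ q → 0 ≤ S q)
    (hS : ∀ q : ℝ, 0 ≤ q → |S q - 3 * q| ≤ C₀ * Real.sqrt q) :
    ∃ C : ℝ, 0 < C ∧ ∀ κ : ℝ, 0 < κ → ∀ p pstar : ℝ → ℝ,
      SolvesTOV S p → p 0 = Real.exp (4 * κ) / 3 →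
      (∀ r : ℝ, 0 < r → 2 * tovMass S p r / r ≤ 8 / 9) →
      SolvesTOV (fun q => 3 * q) pstar → pstar 0 = Real.exp (4 * κ) / 3 →
      (∀ r : ℝ, 0 < r → 2 * tovMass (fun q => 3 * q) pstar r / r ≤ 8 / 9) →
      ∀ r : ℝ, 0 ≤ r →
        |p r - pstar r| ≤
          C * Real.exp (6 * κ) * (r ^ 2 + Real.exp (4 * κ) * r ^ 4) *
            Real.exp (C * (Real.exp (4 * κ) * r ^ 2 + Real.exp (8 * κ) * r ^ 4)) := by
  refine ⟨3 * 10 ^ 6 * (C₀ + 1) ^ 3 * exp (10 ^ 6), by positivity, ?_⟩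
  intro κ hκ p q hp hp0 hpB hq hq0 hqB r hr
  set E := exp (2 * κ)
  have hE2 : exp (4 * κ) = E ^ 2 := by rw [← exp_nat_mul]; ring_nf
  have hE3 : exp (6 * κ) = E ^ 3 := by rw [← exp_nat_mul]; ring_nf
  have hE4 : exp (8 * κ) = E ^ 4 := by rw [← exp_nat_mul]; ring_nf
  rw [hE2] at hp0 hq0
  have hE1 : 1 ≤ E := one_le_exp (by linarith)
  have hp_le : ∀ t, 0 ≤ t → p t ≤ E ^ 2 / 3 := fun t ht =>
    hp0 ▸ hp.antitoneOn hSnonneg self_mem_Ici ht ht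
  have hq_le : ∀ t, 0 ≤ t → q t ≤ E ^ 2 / 3 := fun t ht =>
    hq0 ▸ hq.antitoneOn (fun x hx => by positivity) self_mem_Ici ht ht
  have hA : ∀ t, 0 ≤ t → |S (p t) - 3 * p t| ≤ C₀ * E := fun t ht =>
    (hS _ (hp.2.1 t ht)).trans (by
      gcongr
      exact (Real.sqrt_le_left (by positivity)).2 (by linarith [hp_le t ht, sq_nonneg E]))
  have hM : ∀ t, 0 ≤ t → S (p t) ≤ (C₀ + 1) * E ^ 2 ∧ p t ≤ (C₀ + 1) * E ^ 2 ∧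
      3 * q t ≤ (C₀ + 1) * E ^ 2 := fun t ht => by
    have hSp := (abs_le.1 (hA t ht)).2
    have hpt := hp_le t ht
    have hqt := hq_le t ht
    have hCE : C₀ * E ≤ C₀ * E ^ 2 := by gcongr; nlinarith
    exact ⟨by nlinarith, by nlinarith, by nlinarith⟩
  rw [hE2, hE3, hE4]
  exact (abs_sub_le_of_solvesTOV_massless hScont hSnonneg hp hq hpB hqB hA hM
    (hp0.trans hq0.symm) hr).trans (comparison_bound_le hC₀.le (by positivity))

/-- Comparison of the massive TOV solution with central pressure `e^{4κ}/3`
with the massless one with the same central pressure: there is a constant `C > 0` depending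
only on `C₀` such that
`|p(r) − p*(r)| ≤ C e^{6κ}(r² + e^{4κ}r⁴) exp(C(e^{4κ}r² + e^{8κ}r⁴))` for all `r ≥ 0`. -/
theorem stmt6
    (S : ℝ → ℝ) (C₀ : ℝ) (hC₀ : 0 < C₀)
    (hScont : ContinuousOn S (Set.Ici 0)) (hS0 : S 0 = 0)
    (hSnonneg : ∀ q : ℝ, 0 ≤ q → 0 ≤ S q)
    (hS : ∀ q : ℝ, 0 ≤ q → |S q - 3 * q| ≤ C₀ * Real.sqrt q) :
    ∃ C : ℝ, 0 < C ∧ ∀ κ : ℝ, 0 < κ → ∀ p pstar : ℝ → ℝ,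
      SolvesTOV S p → p 0 = Real.exp (4 * κ) / 3 →
      (∀ r : ℝ, 0 < r → 2 * tovMass S p r / r ≤ 8 / 9) →
      SolvesTOV (fun q => 3 * q) pstar → pstar 0 = Real.exp (4 * κ) / 3 →
      (∀ r : ℝ, 0 < r → 2 * tovMass (fun q => 3 * q) pstar r / r ≤ 8 / 9) →
      ∀ r : ℝ, 0 ≤ r →
        |p r - pstar r| ≤
          C * Real.exp (6 * κ) * (r ^ 2 + Real.exp (4 * κ) * r ^ 4) *
            Real.exp (C * (Real.exp (4 * κ) * r ^ 2 + Real.exp (8 * κ) * r ^ 4)) :=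
  stmt6_general S C₀ hC₀ hScont hSnonneg hS

end
end

section
/- Assume P satisfies (P1). Define N(ρ) := exp( ∫₁^ρ ds / (s + P(s)) ) for ρ > 0. Then: (i) lim_{ρ→0+} N(ρ) = 0, so that setting N(0) := 0 makes N continuous on [0,∞); (ii) N is C² on (0,∞) with N′(ρ) = N(ρ)/(ρ + P(ρ)) > 0 and N″(ρ) = − P′(ρ) N(ρ)/(ρ + P(ρ))² < 0 for ρ > 0, so N′ is positive and strictly decreasing on (0,∞); (iii) lim_{ρ→0+} N′(ρ) exists and lies in (0,∞), so N ∈ C¹([0,∞)); (iv) lim_{ρ→∞} N(ρ) = ∞, so N : [0,∞) → [0,∞) is a strictly increasing bijection. -/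
/-!
Near `0`, `(log N')' = -P'/(ρ + P) ≥ -P'/ρ ≥ -c₁ ρ^(1/n - 1)`, which is integrable at `0`, so the
decreasing function `N'` is bounded and has a finite positive limit `L` at `0⁺`; then
`N = N' · (ρ + P) → L · 0 = 0`. For large `ρ`, `|ρ - 3P| ≤ c₂ √P` forces `ρ + P ≤ 2ρ`, so
`log N ≥ (log ρ)/2 + const`.
-/

open MeasureTheory Filter

noncomputable section

/-- The number density `N(ρ) = exp(∫₁^ρ ds/(s + P(s)))` associated with the equation of
state `P` (meaningful for `ρ > 0`). -/
def Nfun (P : ℝ → ℝ) (ρ : ℝ) : ℝ := Real.exp (∫ s in (1:ℝ)..ρ, (s + P s)⁻¹)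

/-- The extension of `Nfun` by the value `0` for `ρ ≤ 0`. -/
def Nfun₀ (P : ℝ → ℝ) (ρ : ℝ) : ℝ := if ρ ≤ 0 then 0 else Nfun P ρ

open Set Topology

theorem sub_le_sub_of_hasDerivAt_le {u v u' v' : ℝ → ℝ} {a b : ℝ} (hab : a ≤ b)
    (hu : ∀ x ∈ Icc a b, HasDerivAt u (u' x) x) (hv : ∀ x ∈ Icc a b, HasDerivAt v (v' x) x)
    (huv : ∀ x ∈ Ioo a b, v' x ≤ u' x) : v b - v a ≤ u b - u a := by
  have hd : ∀ x ∈ Icc a b, HasDerivAt (fun y => u y - v y) (u' x - v' x) x :=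
    fun x hx => (hu x hx).sub (hv x hx)
  have hmono : MonotoneOn (fun y => u y - v y) (Icc a b) := by
    refine monotoneOn_of_deriv_nonneg (convex_Icc a b)
      (fun x hx => (hd x hx).continuousAt.continuousWithinAt) ?_ ?_ <;> rw [interior_Icc]
    · exact fun x hx => (hd x (Ioo_subset_Icc_self hx)).differentiableAt.differentiableWithinAt
    · intro x hx
      rw [(hd x (Ioo_subset_Icc_self hx)).deriv]
      linarith [huv x hx]
  linarith [hmono (left_mem_Icc.2 hab) (right_mem_Icc.2 hab) hab]

theorem ContDiffOn.hasDerivAt_deriv_of_mem_Ioi {f : ℝ → ℝ} {a x : ℝ}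
    (hf : ContDiffOn ℝ 1 f (Ioi a)) (hx : a < x) : HasDerivAt f (deriv f x) x :=
  ((hf.differentiableOn one_ne_zero x hx).differentiableAt (Ioi_mem_nhds hx)).hasDerivAt

theorem contDiffOn_one_Ici_of_tendsto_deriv {g : ℝ → ℝ} {a L : ℝ}
    (hcont : ContinuousWithinAt g (Ici a) a) (hg : ContDiffOn ℝ 1 g (Ioi a))
    (hL : Tendsto (deriv g) (𝓝[>] a) (𝓝 L)) : ContDiffOn ℝ 1 g (Ici a) := by
  have hdiff : DifferentiableOn ℝ g (Ioi a) := hg.differentiableOn one_ne_zero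
  have hderiv : ∀ x ∈ Ioi a, derivWithin g (Ici a) x = deriv g x := fun x hx =>
    derivWithin_of_mem_nhds (Ici_mem_nhds hx)
  have hga : HasDerivWithinAt g L (Ici a) a :=
    hasDerivWithinAt_Ici_of_tendsto_deriv hdiff (hcont.mono Ioi_subset_Ici_self)
      self_mem_nhdsWithin hL
  rw [contDiffOn_one_iff_derivWithin (uniqueDiffOn_Ici a)]
  constructor
  · intro x hx
    rcases (mem_Ici.1 hx).eq_or_lt with rfl | hx
    · exact hga.differentiableWithinAt
    · exact ((hdiff x hx).differentiableAt (Ioi_mem_nhds hx)).differentiableWithinAt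
  · intro x hx
    rcases (mem_Ici.1 hx).eq_or_lt with rfl | hx
    · rw [← continuousWithinAt_Ioi_iff_Ici, ContinuousWithinAt,
        hga.derivWithin (uniqueDiffOn_Ici a a self_mem_Ici)]
      exact hL.congr' (eventually_nhdsWithin_of_forall fun y hy => (hderiv y hy).symm)
    · refine ((hg.continuousOn_deriv_of_isOpen isOpen_Ioi le_rfl).continuousAt
        (Ioi_mem_nhds hx)).congr ?_ |>.continuousWithinAt
      exact eventually_of_mem (Ioi_mem_nhds hx) fun y hy => (hderiv y hy).symm

theorem bijOn_Ici_zero_of_strictMonoOn {g : ℝ → ℝ} (hc : ContinuousOn g (Ici 0))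
    (hm : StrictMonoOn g (Ici 0)) (h0 : g 0 = 0) (htop : Tendsto g atTop atTop) :
    BijOn g (Ici 0) (Ici 0) := by
  refine ⟨fun x hx => h0 ▸ hm.monotoneOn self_mem_Ici hx hx, hm.injOn, fun y hy => ?_⟩
  obtain ⟨b, hyb, hb⟩ := ((htop.eventually_ge_atTop y).and (eventually_ge_atTop 0)).exists
  obtain ⟨x, hx, rfl⟩ := intermediate_value_Icc hb (hc.mono Icc_subset_Ici_self)
    ⟨h0.symm ▸ hy, hyb⟩
  exact ⟨x, hx.1, rfl⟩

theorem add_le_two_mul_of_abs_sub_le {s q c : ℝ} (hq : 0 ≤ q) (h : |s - 3 * q| ≤ c * √q)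
    (hs : c ^ 2 / 4 ≤ s) : s + q ≤ 2 * s := by
  have hsq := Real.sq_sqrt hq
  nlinarith [(abs_le.1 h).1, sq_nonneg (√q - c / 2)]

theorem Nfun_pos (P : ℝ → ℝ) (ρ : ℝ) : 0 < Nfun P ρ := Real.exp_pos _

section Nfun

variable {P : ℝ → ℝ}

theorem intervalIntegrable_inv_add (hPc : ContinuousOn P (Ioi 0))
    (hPnn : ∀ s, 0 < s → 0 ≤ P s) {a b : ℝ} (ha : 0 < a) (hb : 0 < b) :
    IntervalIntegrable (fun s => (s + P s)⁻¹) volume a b :=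
  ((continuousOn_id.add hPc).inv₀ fun s hs => (add_pos_of_pos_of_nonneg hs (hPnn s hs)).ne')
    |>.mono (ordConnected_Ioi.uIcc_subset ha hb) |>.intervalIntegrable

theorem hasDerivAt_integral_inv_add (hPc : ContinuousOn P (Ioi 0))
    (hPnn : ∀ s, 0 < s → 0 ≤ P s) {ρ : ℝ} (hρ : 0 < ρ) :
    HasDerivAt (fun x => ∫ s in (1:ℝ)..x, (s + P s)⁻¹) (ρ + P ρ)⁻¹ ρ := by
  have hcont : ContinuousOn (fun s => (s + P s)⁻¹) (Ioi 0) :=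
    (continuousOn_id.add hPc).inv₀ fun s hs => (add_pos_of_pos_of_nonneg hs (hPnn s hs)).ne'
  exact intervalIntegral.integral_hasDerivAt_right
    (intervalIntegrable_inv_add hPc hPnn one_pos hρ)
    (hcont.stronglyMeasurableAtFilter isOpen_Ioi ρ hρ) (hcont.continuousAt (Ioi_mem_nhds hρ))

theorem hasDerivAt_Nfun (hPc : ContinuousOn P (Ioi 0)) (hPnn : ∀ s, 0 < s → 0 ≤ P s)
    {ρ : ℝ} (hρ : 0 < ρ) : HasDerivAt (Nfun P) (Nfun P ρ / (ρ + P ρ)) ρ :=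
  (hasDerivAt_integral_inv_add hPc hPnn hρ).exp

theorem deriv_Nfun (hPc : ContinuousOn P (Ioi 0)) (hPnn : ∀ s, 0 < s → 0 ≤ P s)
    {ρ : ℝ} (hρ : 0 < ρ) : deriv (Nfun P) ρ = Nfun P ρ / (ρ + P ρ) :=
  (hasDerivAt_Nfun hPc hPnn hρ).deriv

theorem deriv_Nfun_pos (hPc : ContinuousOn P (Ioi 0)) (hPnn : ∀ s, 0 < s → 0 ≤ P s)
    {ρ : ℝ} (hρ : 0 < ρ) : 0 < deriv (Nfun P) ρ := by
  rw [deriv_Nfun hPc hPnn hρ]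
  exact div_pos (Nfun_pos P ρ) (add_pos_of_pos_of_nonneg hρ (hPnn ρ hρ))

theorem hasDerivAt_deriv_Nfun (hPc : ContinuousOn P (Ioi 0)) (hPnn : ∀ s, 0 < s → 0 ≤ P s)
    {ρ p : ℝ} (hρ : 0 < ρ) (hp : HasDerivAt P p ρ) :
    HasDerivAt (deriv (Nfun P)) (-p * Nfun P ρ / (ρ + P ρ) ^ 2) ρ := by
  have hne : ρ + P ρ ≠ 0 := (add_pos_of_pos_of_nonneg hρ (hPnn ρ hρ)).ne'
  have hquot := (hasDerivAt_Nfun hPc hPnn hρ).div ((hasDerivAt_id ρ).add hp) hne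
  refine (hquot.congr_deriv ?_).congr_of_eventuallyEq ?_
  · simp only [Pi.add_apply, id_eq]
    field_simp
    ring
  · exact eventually_of_mem (Ioi_mem_nhds hρ) fun x hx => deriv_Nfun hPc hPnn hx

theorem contDiffOn_Nfun (hP : ContDiffOn ℝ 1 P (Ioi 0)) (hPnn : ∀ s, 0 < s → 0 ≤ P s) :
    ContDiffOn ℝ 2 (Nfun P) (Ioi 0) := by
  have hF : ContDiffOn ℝ 2 (fun x => ∫ s in (1:ℝ)..x, (s + P s)⁻¹) (Ioi 0) := by
    rw [← one_add_one_eq_two, contDiffOn_succ_iff_deriv_of_isOpen isOpen_Ioi]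
    refine ⟨fun x hx => (hasDerivAt_integral_inv_add hP.continuousOn hPnn hx)
      |>.differentiableAt.differentiableWithinAt, by simp, ?_⟩
    refine ((contDiffOn_id.add hP).inv fun s hs =>
      (add_pos_of_pos_of_nonneg hs (hPnn s hs)).ne').congr fun x hx => ?_
    exact (hasDerivAt_integral_inv_add hP.continuousOn hPnn hx).deriv
  exact Real.contDiff_exp.comp_contDiffOn hF

theorem deriv_deriv_Nfun (hP : ContDiffOn ℝ 1 P (Ioi 0)) (hPnn : ∀ s, 0 < s → 0 ≤ P s)
    {ρ : ℝ} (hρ : 0 < ρ) :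
    deriv (deriv (Nfun P)) ρ = -(deriv P ρ) * Nfun P ρ / (ρ + P ρ) ^ 2 :=
  (hasDerivAt_deriv_Nfun hP.continuousOn hPnn hρ (hP.hasDerivAt_deriv_of_mem_Ioi hρ)).deriv

theorem deriv_deriv_Nfun_neg (hP : ContDiffOn ℝ 1 P (Ioi 0)) (hPnn : ∀ s, 0 < s → 0 ≤ P s)
    {ρ : ℝ} (hρ : 0 < ρ) (hP' : 0 < deriv P ρ) : deriv (deriv (Nfun P)) ρ < 0 := by
  rw [deriv_deriv_Nfun hP hPnn hρ]
  exact div_neg_of_neg_of_pos (mul_neg_of_neg_of_pos (neg_neg_of_pos hP') (Nfun_pos P ρ))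
    (pow_pos (add_pos_of_pos_of_nonneg hρ (hPnn ρ hρ)) 2)

theorem strictAntiOn_deriv_Nfun (hP : ContDiffOn ℝ 1 P (Ioi 0))
    (hPnn : ∀ s, 0 < s → 0 ≤ P s) (hP' : ∀ x, 0 < x → 0 < deriv P x) :
    StrictAntiOn (deriv (Nfun P)) (Ioi 0) := by
  refine strictAntiOn_of_deriv_neg (convex_Ioi 0) (fun x hx => (hasDerivAt_deriv_Nfun
    hP.continuousOn hPnn hx (hP.hasDerivAt_deriv_of_mem_Ioi hx)).continuousAt.continuousWithinAt) ?_
  rw [interior_Ioi]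
  exact fun x hx => deriv_deriv_Nfun_neg hP hPnn hx (hP' x hx)

theorem hasDerivAt_log_deriv_Nfun (hP : ContDiffOn ℝ 1 P (Ioi 0))
    (hPnn : ∀ s, 0 < s → 0 ≤ P s) {ρ : ℝ} (hρ : 0 < ρ) :
    HasDerivAt (fun x => Real.log (deriv (Nfun P) x)) (-deriv P ρ / (ρ + P ρ)) ρ := by
  have hne : ρ + P ρ ≠ 0 := (add_pos_of_pos_of_nonneg hρ (hPnn ρ hρ)).ne'
  refine ((hasDerivAt_deriv_Nfun hP.continuousOn hPnn hρ (hP.hasDerivAt_deriv_of_mem_Ioi hρ)).log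
    (deriv_Nfun_pos hP.continuousOn hPnn hρ).ne').congr_deriv ?_
  rw [deriv_Nfun hP.continuousOn hPnn hρ]
  field_simp [(Nfun_pos P ρ).ne']

theorem deriv_Nfun_le_of_deriv_le_rpow {c α b ρ δ : ℝ} (hc : 0 ≤ c) (hα : 0 < α)
    (hP : ContDiffOn ℝ 1 P (Ioi 0)) (hPnn : ∀ s, 0 < s → 0 ≤ P s)
    (hP' : ∀ x ∈ Ioo 0 b, 0 ≤ deriv P x) (hsmall : ∀ x ∈ Ioo 0 b, deriv P x ≤ c * x ^ α)
    (hρ : 0 < ρ) (hρδ : ρ ≤ δ) (hδb : δ < b) :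
    deriv (Nfun P) ρ ≤ deriv (Nfun P) δ * Real.exp (c * δ ^ α / α) := by
  have hcmp := sub_le_sub_of_hasDerivAt_le hρδ
    (u := fun x => Real.log (deriv (Nfun P) x)) (v := fun x => -(c * x ^ α / α))
    (fun x hx => hasDerivAt_log_deriv_Nfun hP hPnn (hρ.trans_le hx.1))
    (fun x hx => (((Real.hasDerivAt_rpow_const (Or.inl (hρ.trans_le hx.1).ne')).const_mul c
      ).div_const α).neg) fun x hx => ?_
  · have hδ : 0 < δ := hρ.trans_le hρδ
    have hlog : Real.log (deriv (Nfun P) ρ) ≤ Real.log (deriv (Nfun P) δ) + c * δ ^ α / α := by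
      have : 0 ≤ c * ρ ^ α / α := by positivity
      linarith
    rwa [Real.log_le_iff_le_exp (deriv_Nfun_pos hP.continuousOn hPnn hρ), Real.exp_add,
      Real.exp_log (deriv_Nfun_pos hP.continuousOn hPnn hδ)] at hlog
  · have hx0 : 0 < x := hρ.trans hx.1
    have hxb : x ∈ Ioo 0 b := ⟨hx0, hx.2.trans_le hδb.le⟩
    calc -(c * (α * x ^ (α - 1)) / α) = -(c * x ^ α / x) := by
          rw [Real.rpow_sub_one hx0.ne']; field_simp
      _ ≤ -(deriv P x / x) := by gcongr; exact hsmall x hxb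
      _ ≤ -deriv P x / (x + P x) := by
          rw [neg_div, neg_le_neg_iff]
          exact div_le_div_of_nonneg_left (hP' x hxb) hx0 (le_add_of_nonneg_right (hPnn x hx0))

theorem exists_tendsto_deriv_Nfun_nhdsGT {c α b : ℝ} (hc : 0 ≤ c) (hα : 0 < α) (hb : 0 < b)
    (hP : ContDiffOn ℝ 1 P (Ioi 0)) (hPnn : ∀ s, 0 < s → 0 ≤ P s)
    (hP' : ∀ x, 0 < x → 0 < deriv P x) (hsmall : ∀ x ∈ Ioo 0 b, deriv P x ≤ c * x ^ α) :
    ∃ L, 0 < L ∧ Tendsto (deriv (Nfun P)) (𝓝[>] 0) (𝓝 L) := by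
  have hanti := strictAntiOn_deriv_Nfun hP hPnn hP'
  have hδ : 0 < b / 2 := half_pos hb
  have hbdd : BddAbove (deriv (Nfun P) '' Ioi 0) := by
    refine ⟨max (deriv (Nfun P) (b / 2) * Real.exp (c * (b / 2) ^ α / α))
      (deriv (Nfun P) (b / 2)), ?_⟩
    rintro _ ⟨x, hx, rfl⟩
    rcases le_or_gt x (b / 2) with hxδ | hxδ
    · exact le_max_of_le_left <| deriv_Nfun_le_of_deriv_le_rpow hc hα hP hPnn
        (fun x hx => (hP' x hx.1).le) hsmall hx hxδ (half_lt_self hb)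
    · exact le_max_of_le_right (hanti.antitoneOn hδ hx hxδ.le)
  refine ⟨_, ?_, hanti.antitoneOn.tendsto_nhdsGT hbdd⟩
  exact (deriv_Nfun_pos hP.continuousOn hPnn one_pos).trans_le
    (le_csSup hbdd (mem_image_of_mem _ (mem_Ioi.2 one_pos)))

theorem tendsto_Nfun_nhdsGT_zero (hPc : ContinuousOn P (Ici 0)) (hP0 : P 0 = 0)
    (hPnn : ∀ s, 0 < s → 0 ≤ P s) {L : ℝ} (hL : Tendsto (deriv (Nfun P)) (𝓝[>] 0) (𝓝 L)) :
    Tendsto (Nfun P) (𝓝[>] 0) (𝓝 0) := by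
  have hP : Tendsto (fun x => x + P x) (𝓝[>] 0) (𝓝 0) := by
    simpa [hP0] using (tendsto_nhdsWithin_of_tendsto_nhds tendsto_id).add
      ((hPc 0 self_mem_Ici).mono Ioi_subset_Ici_self).tendsto
  refine (mul_zero L ▸ hL.mul hP).congr' (eventually_nhdsWithin_of_forall fun x hx => ?_)
  rw [deriv_Nfun (hPc.mono Ioi_subset_Ici_self) hPnn hx,
    div_mul_cancel₀ _ (add_pos_of_pos_of_nonneg hx (hPnn x hx)).ne']

theorem Nfun₀_of_pos {x : ℝ} (hx : 0 < x) : Nfun₀ P x = Nfun P x := if_neg (not_le.2 hx)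

theorem Nfun₀_eventuallyEq {x : ℝ} (hx : 0 < x) : Nfun₀ P =ᶠ[𝓝 x] Nfun P :=
  eventually_of_mem (Ioi_mem_nhds hx) fun _ hy => Nfun₀_of_pos hy

theorem contDiffOn_Nfun₀ (hP : ContDiffOn ℝ 1 P (Ioi 0)) (hPnn : ∀ s, 0 < s → 0 ≤ P s)
    (hN0 : Tendsto (Nfun P) (𝓝[>] 0) (𝓝 0)) {L : ℝ}
    (hL : Tendsto (deriv (Nfun P)) (𝓝[>] 0) (𝓝 L)) : ContDiffOn ℝ 1 (Nfun₀ P) (Ici 0) := by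
  have heq : EqOn (Nfun₀ P) (Nfun P) (Ioi 0) := fun _ hx => Nfun₀_of_pos hx
  refine contDiffOn_one_Ici_of_tendsto_deriv ?_
    (((contDiffOn_Nfun hP hPnn).of_le one_le_two).congr heq)
    (hL.congr' (eventually_nhdsWithin_of_forall fun x hx => (Nfun₀_eventuallyEq hx).deriv_eq.symm))
  rw [← continuousWithinAt_Ioi_iff_Ici, ContinuousWithinAt, show Nfun₀ P 0 = 0 from if_pos le_rfl]
  exact hN0.congr' (eventually_nhdsWithin_of_forall fun x hx => (heq hx).symm)

theorem strictMonoOn_Nfun₀ (hPc : ContinuousOn P (Ioi 0)) (hPnn : ∀ s, 0 < s → 0 ≤ P s)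
    (hcont : ContinuousOn (Nfun₀ P) (Ici 0)) : StrictMonoOn (Nfun₀ P) (Ici 0) := by
  refine strictMonoOn_of_deriv_pos (convex_Ici 0) hcont fun x hx => ?_
  rw [interior_Ici] at hx
  rw [(Nfun₀_eventuallyEq hx).deriv_eq]
  exact deriv_Nfun_pos hPc hPnn hx

theorem tendsto_Nfun_atTop (hPc : ContinuousOn P (Ioi 0)) (hPnn : ∀ s, 0 < s → 0 ≤ P s)
    {s₀ : ℝ} (hs₀ : 0 < s₀) (hlin : ∀ s, s₀ ≤ s → s + P s ≤ 2 * s) :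
    Tendsto (Nfun P) atTop atTop := by
  set F : ℝ → ℝ := fun x => ∫ s in (1:ℝ)..x, (s + P s)⁻¹
  have hF : ∀ ρ, s₀ ≤ ρ → F s₀ + (Real.log ρ - Real.log s₀) / 2 ≤ F ρ := by
    intro ρ hρ
    have := sub_le_sub_of_hasDerivAt_le hρ (u := F) (v := fun x => Real.log x / 2)
      (fun x hx => hasDerivAt_integral_inv_add hPc hPnn (hs₀.trans_le hx.1))
      (fun x hx => (Real.hasDerivAt_log (hs₀.trans_le hx.1).ne').div_const 2) fun x hx => ?_
    · linarith
    · have hx0 : 0 < x := hs₀.trans hx.1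
      rw [div_eq_mul_inv, ← mul_inv, mul_comm]
      exact inv_anti₀ (add_pos_of_pos_of_nonneg hx0 (hPnn x hx0)) (hlin x hx.1.le)
  have hlog : Tendsto (fun ρ => F s₀ + (Real.log ρ - Real.log s₀) / 2) atTop atTop :=
    tendsto_atTop_add_const_left _ _ <| Tendsto.atTop_div_const two_pos <|
      tendsto_atTop_add_const_right _ _ Real.tendsto_log_atTop
  exact Real.tendsto_exp_atTop.comp <|
    tendsto_atTop_mono' atTop ((eventually_ge_atTop s₀).mono hF) hlog

end Nfun

theorem stmt17_general (P : ℝ → ℝ) (c₁ c₂ n ρs : ℝ)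
    (hPC1 : ContDiffOn ℝ 1 P (Set.Ici 0)) (hP0 : P 0 = 0)
    (hP' : ∀ ρ : ℝ, 0 < ρ → 0 < deriv P ρ)
    (hc₁ : 0 < c₁) (hn : n ∈ Set.Ioo (0:ℝ) 3) (hρs : 0 < ρs)
    (hPsmall : ∀ ρ ∈ Set.Ioo (0:ℝ) ρs, deriv P ρ ≤ c₁ * ρ ^ (1 / n))
    (hPinv : ∀ q : ℝ, 0 < q → ∀ ρ : ℝ, 0 ≤ ρ → P ρ = q →
      |ρ - 3 * q| ≤ c₂ * Real.sqrt q) :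
    Tendsto (Nfun P) (nhdsWithin 0 (Set.Ioi 0)) (nhds 0) ∧
    ContinuousOn (Nfun₀ P) (Set.Ici 0) ∧
    ContDiffOn ℝ 2 (Nfun P) (Set.Ioi 0) ∧
    (∀ ρ : ℝ, 0 < ρ →
      deriv (Nfun P) ρ = Nfun P ρ / (ρ + P ρ) ∧
      0 < deriv (Nfun P) ρ ∧
      deriv (deriv (Nfun P)) ρ = -(deriv P ρ) * Nfun P ρ / (ρ + P ρ) ^ 2 ∧
      deriv (deriv (Nfun P)) ρ < 0) ∧
    StrictAntiOn (deriv (Nfun P)) (Set.Ioi 0) ∧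
    (∃ L : ℝ, 0 < L ∧ Tendsto (deriv (Nfun P)) (nhdsWithin 0 (Set.Ioi 0)) (nhds L)) ∧
    ContDiffOn ℝ 1 (Nfun₀ P) (Set.Ici 0) ∧
    Tendsto (Nfun P) atTop atTop ∧
    StrictMonoOn (Nfun₀ P) (Set.Ici 0) ∧
    Set.BijOn (Nfun₀ P) (Set.Ici 0) (Set.Ici 0) := by
  have hP : ContDiffOn ℝ 1 P (Ioi 0) := hPC1.mono Ioi_subset_Ici_self
  have hPc : ContinuousOn P (Ioi 0) := hP.continuousOn
  have hPpos : ∀ s, 0 < s → 0 < P s := fun s hs => hP0 ▸ strictMonoOn_of_deriv_pos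
    (convex_Ici 0) hPC1.continuousOn (by rwa [interior_Ici]) self_mem_Ici hs.le hs
  have hPnn : ∀ s, 0 < s → 0 ≤ P s := fun s hs => (hPpos s hs).le
  obtain ⟨L, hL, hlim⟩ := exists_tendsto_deriv_Nfun_nhdsGT hc₁.le (one_div_pos.2 hn.1) hρs
    hP hPnn hP' hPsmall
  have hN0 := tendsto_Nfun_nhdsGT_zero hPC1.continuousOn hP0 hPnn hlim
  have hC1 := contDiffOn_Nfun₀ hP hPnn hN0 hlim
  have htop : Tendsto (Nfun P) atTop atTop := by
    refine tendsto_Nfun_atTop hPc hPnn (s₀ := max 1 (c₂ ^ 2 / 4)) (by positivity) fun s hs => ?_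
    have hs0 : 0 < s := lt_of_lt_of_le (by positivity) hs
    exact add_le_two_mul_of_abs_sub_le (hPnn s hs0) (hPinv _ (hPpos s hs0) s hs0.le rfl)
      (le_of_max_le_right hs)
  have hmono := strictMonoOn_Nfun₀ hPc hPnn hC1.continuousOn
  refine ⟨hN0, hC1.continuousOn, contDiffOn_Nfun hP hPnn, fun ρ hρ => ⟨deriv_Nfun hPc hPnn hρ,
    deriv_Nfun_pos hPc hPnn hρ, deriv_deriv_Nfun hP hPnn hρ,
    deriv_deriv_Nfun_neg hP hPnn hρ (hP' ρ hρ)⟩, strictAntiOn_deriv_Nfun hP hPnn hP',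
    ⟨L, hL, hlim⟩, hC1, htop, hmono,
    bijOn_Ici_zero_of_strictMonoOn hC1.continuousOn hmono (if_pos le_rfl) ?_⟩
  exact htop.congr' ((eventually_gt_atTop 0).mono fun x hx => (Nfun₀_of_pos hx).symm)

/-- Under assumption (P1) on the equation of state `P`, the number density
`N(ρ) = exp(∫₁^ρ ds/(s+P(s)))` satisfies: (i) `N(ρ) → 0` as `ρ → 0⁺`, so setting `N(0) = 0`
gives a continuous function on `[0,∞)`; (ii) `N` is `C²` on `(0,∞)` with
`N′ = N/(ρ+P) > 0` and `N″ = −P′N/(ρ+P)² < 0`, so `N′` is strictly decreasing on `(0,∞)`;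
(iii) `N′(ρ)` has a finite positive limit as `ρ → 0⁺`, so `N ∈ C¹([0,∞))`; (iv) `N(ρ) → ∞`
as `ρ → ∞`, so the extended `N` is a strictly increasing bijection of `[0,∞)` onto itself. -/
theorem stmt17 (P : ℝ → ℝ) (c₁ c₂ n ρs : ℝ)
    (hPC1 : ContDiffOn ℝ 1 P (Set.Ici 0)) (hP0 : P 0 = 0)
    (hP' : ∀ ρ : ℝ, 0 < ρ → 0 < deriv P ρ)
    (hc₁ : 0 < c₁) (hn : n ∈ Set.Ioo (0:ℝ) 3) (hρs : 0 < ρs)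
    (hPsmall : ∀ ρ ∈ Set.Ioo (0:ℝ) ρs, deriv P ρ ≤ c₁ * ρ ^ (1 / n))
    (hPbij : Set.BijOn P (Set.Ici 0) (Set.Ici 0))
    (hc₂ : 0 < c₂)
    (hPinv : ∀ q : ℝ, 0 < q → ∀ ρ : ℝ, 0 ≤ ρ → P ρ = q →
      |ρ - 3 * q| ≤ c₂ * Real.sqrt q) :
    Tendsto (Nfun P) (nhdsWithin 0 (Set.Ioi 0)) (nhds 0) ∧
    ContinuousOn (Nfun₀ P) (Set.Ici 0) ∧
    ContDiffOn ℝ 2 (Nfun P) (Set.Ioi 0) ∧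
    (∀ ρ : ℝ, 0 < ρ →
      deriv (Nfun P) ρ = Nfun P ρ / (ρ + P ρ) ∧
      0 < deriv (Nfun P) ρ ∧
      deriv (deriv (Nfun P)) ρ = -(deriv P ρ) * Nfun P ρ / (ρ + P ρ) ^ 2 ∧
      deriv (deriv (Nfun P)) ρ < 0) ∧
    StrictAntiOn (deriv (Nfun P)) (Set.Ioi 0) ∧
    (∃ L : ℝ, 0 < L ∧ Tendsto (deriv (Nfun P)) (nhdsWithin 0 (Set.Ioi 0)) (nhds L)) ∧
    ContDiffOn ℝ 1 (Nfun₀ P) (Set.Ici 0) ∧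
    Tendsto (Nfun P) atTop atTop ∧
    StrictMonoOn (Nfun₀ P) (Set.Ici 0) ∧
    Set.BijOn (Nfun₀ P) (Set.Ici 0) (Set.Ici 0) :=
  stmt17_general P c₁ c₂ n ρs hPC1 hP0 hP' hc₁ hn hρs hPsmall hPinv

end
end
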